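/- Let t be a substring of T. Then for every s ∈ S_t, one has ext(t) = ext(s). -/
import Mathlib


/-- `frag T i j` is the fragment `T[i, j]` of `T` (1-indexed, inclusive). -/
def frag {α : Type*} (T : List α) (i j : ℕ) : List α := (T.drop (i - 1)).take (j - i + 1)

/-- `t` is a substring of `T`, i.e. `t = T[i, j]` for some `1 ≤ i ≤ j ≤ |T|`. -/
def IsSub {α : Type*} (T t : List α) : Prop :=
  ∃ i j : ℕ, 1 ≤ i ∧ i ≤ j ∧ j ≤ T.length ∧ frag T i j = t

/-- `occ T t` is the set of occurrences of `t` in `T`: pairs `(i, j)` with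
`1 ≤ i ≤ j ≤ |T|` and `T[i, j] = t`. -/
def occ {α : Type*} (T t : List α) : Set (ℕ × ℕ) :=
  {p | 1 ≤ p.1 ∧ p.1 ≤ p.2 ∧ p.2 ≤ T.length ∧ frag T p.1 p.2 = t}

/-- `Sset T t` is the set `S_t`: substrings `s` of `T` such that `t` occurs in `s`
and `|occ_T(t)| = |occ_T(s)|`. -/
def Sset {α : Type*} (T t : List α) : Set (List α) :=
  {s | IsSub T s ∧ (∃ a b : ℕ, 1 ≤ a ∧ a ≤ b ∧ b ≤ s.length ∧ frag s a b = t) ∧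
    (occ T t).ncard = (occ T s).ncard}

/-- `IsExt T t e` says that `e` is a longest string in `S_t`, i.e. `e = ext(t)`. -/
def IsExt {α : Type*} (T t e : List α) : Prop :=
  e ∈ Sset T t ∧ ∀ s ∈ Sset T t, s.length ≤ e.length

lemma frag_length {α : Type*} (T : List α) {i j : ℕ} (h1 : 1 ≤ i) (h2 : i ≤ j) (h3 : j ≤ T.length) :
    (frag T i j).length = j - i + 1 := by
  simp [frag]; omega

lemma frag_frag {α : Type*} (T : List α) {p q a b : ℕ} (hp : 1 ≤ p)
    (ha : 1 ≤ a) (hab : a ≤ b) (hb : b ≤ q - p + 1) :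
    frag (frag T p q) a b = frag T (p + a - 1) (p + b - 1) := by
  unfold frag
  rw [List.drop_take, List.drop_drop, List.take_take]
  have h1 : min (b - a + 1) (q - p + 1 - (a - 1)) = b - a + 1 := by omega
  rw [h1]
  have h2 : p - 1 + (a - 1) = p + a - 1 - 1 := by omega
  have h3 : b - a + 1 = p + b - 1 - (p + a - 1) + 1 := by omega
  rw [h2, h3]

lemma frag_glue {α : Type*} (T : List α) {p q p' q' : ℕ} (hp : 1 ≤ p) (hpp' : p ≤ p')
    (hp1 : 1 ≤ p') (hp'q : p' ≤ q + 1) (hqq' : q ≤ q') (hpq : p ≤ q) (hpq' : p' ≤ q') :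
    frag T p q' = frag T p q ++ (frag T p' q').drop (q + 1 - p') := by
  unfold frag
  rw [List.drop_take, List.drop_drop]
  have h1 : q' - p' + 1 - (q + 1 - p') = q' - q := by omega
  have h2 : p' - 1 + (q + 1 - p') = q := by omega
  rw [h1, h2]
  have h3 : q' - p + 1 = (q - p + 1) + (q' - q) := by omega
  rw [h3, List.take_add]
  congr 1
  rw [List.drop_drop]
  have h4 : p - 1 + (q - p + 1) = q := by omega
  rw [h4]

lemma occ_len {α : Type*} {T x : List α} {p q : ℕ} (h : (p,q) ∈ occ T x) :
    q + 1 = p + x.length := by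
  obtain ⟨h1,h2,h3,h4⟩ := h
  have := frag_length T h1 h2 h3
  rw [h4] at this; omega

lemma occ_comp {α : Type*} {T e x : List α} {p q a b : ℕ} (he : (p,q) ∈ occ T e)
    (ha : 1 ≤ a) (hab : a ≤ b) (hb : b ≤ e.length) (hfr : frag e a b = x) :
    (p+a-1, p+b-1) ∈ occ T x := by
  obtain ⟨hp, hpq, hqn, hfe⟩ := he
  dsimp only at hp hpq hqn hfe
  have hlen : e.length = q - p + 1 := by
    rw [← hfe, frag_length T hp hpq hqn]
  refine ⟨by omega, by omega, by omega, ?_⟩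
  rw [← frag_frag T (q := q) hp ha hab (by omega), hfe, hfr]

lemma frag_of_inner {α : Type*} {T e x : List α} {p q p' q' : ℕ}
    (he : (p,q) ∈ occ T e) (hx : (p',q') ∈ occ T x) (h1 : p ≤ p') (h2 : q' ≤ q) :
    frag e (p'+1-p) (q'+1-p) = x := by
  obtain ⟨hp, hpq, hqn, hfe⟩ := he
  obtain ⟨hp', hpq', hqn', hfx⟩ := hx
  dsimp only at hp hpq hqn hfe hp' hpq' hqn' hfx
  have hq' : (frag T p q).length = q - p + 1 := frag_length T hp hpq hqn
  have key := frag_frag T (q := q) (a := p'+1-p) (b := q'+1-p) hp (by omega) (by omega) (by omega)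
  rw [hfe] at key
  rw [key]
  have e1 : p + (p'+1-p) - 1 = p' := by omega
  have e2 : p + (q'+1-p) - 1 = q' := by omega
  rw [e1, e2, hfx]

lemma occ_finite {α : Type*} (T x : List α) : (occ T x).Finite := by
  apply Set.Finite.subset ((Set.finite_Iic T.length).prod (Set.finite_Iic T.length))
  rintro ⟨p,q⟩ ⟨h1,h2,h3,h4⟩
  exact ⟨by simpa using le_trans h2 h3, by simpa using h3⟩

lemma surj_occ {α : Type*} {T x t : List α} {i j a b : ℕ}
    (hij : (i,j) ∈ occ T x)
    (ha : 1 ≤ a) (hab : a ≤ b) (hb : b ≤ x.length)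
    (hfr : frag x a b = t)
    (hcard : (occ T t).ncard = (occ T x).ncard) :
    ∀ k l, (k,l) ∈ occ T t → a ≤ k ∧ (k + 1 - a, l + (x.length - b)) ∈ occ T x := by
  set f : ℕ × ℕ → ℕ × ℕ := fun p => (p.1 + a - 1, p.1 + b - 1) with hf
  have hmaps : f '' (occ T x) ⊆ occ T t := by
    rintro _ ⟨⟨p,q⟩, hpq, rfl⟩
    exact occ_comp hpq ha hab hb hfr
  have hinj : Set.InjOn f (occ T x) := by
    rintro ⟨p,q⟩ hpq ⟨p',q'⟩ hpq' heq
    have l1 := occ_len hpq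
    have l2 := occ_len hpq'
    have : p + a - 1 = p' + a - 1 := congrArg Prod.fst heq
    have hp1 : 1 ≤ p := hpq.1
    have hp2 : 1 ≤ p' := hpq'.1
    have : p = p' := by omega
    subst this
    have : q = q' := by omega
    simp [this]
  have him : f '' (occ T x) = occ T t :=
    Set.eq_of_subset_of_ncard_le hmaps
      (by rw [hcard, Set.ncard_image_of_injOn hinj]) (occ_finite T t)
  intro k l hkl
  rw [← him] at hkl
  obtain ⟨⟨p,q⟩, hpq, heq⟩ := hkl
  have hk : p + a - 1 = k := congrArg Prod.fst heq
  have hl : p + b - 1 = l := congrArg Prod.snd heq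
  have l1 := occ_len hpq
  have hp1 : 1 ≤ p := hpq.1
  have e1 : k + 1 - a = p := by omega
  have e2 : l + (x.length - b) = q := by omega
  rw [e1, e2]
  exact ⟨by omega, hpq⟩

lemma mergeAux {α : Type*} {T t e₁ e₂ : List α} {k₀ l₀ a₁ b₁ a₂ b₂ : ℕ}
    (h₀ : (k₀, l₀) ∈ occ T t)
    (ha₂ : 1 ≤ a₂) (h21 : a₂ ≤ a₁)
    (hs₁ : ∀ k l, (k,l) ∈ occ T t → a₁ ≤ k ∧ (k+1-a₁, l+(e₁.length-b₁)) ∈ occ T e₁)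
    (hs₂ : ∀ k l, (k,l) ∈ occ T t → a₂ ≤ k ∧ (k+1-a₂, l+(e₂.length-b₂)) ∈ occ T e₂) :
    frag T (k₀+1-a₁) (l₀ + max (e₁.length-b₁) (e₂.length-b₂)) ∈ Sset T t ∧
    (frag T (k₀+1-a₁) (l₀ + max (e₁.length-b₁) (e₂.length-b₂))).length
      = t.length + (a₁-1) + max (e₁.length-b₁) (e₂.length-b₂) := by
  set d₁ := e₁.length - b₁ with hd₁
  set d₂ := e₂.length - b₂ with hd₂
  set d := max d₁ d₂ with hd
  set u := frag T (k₀+1-a₁) (l₀ + d) with hu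
  have htlen := occ_len h₀
  have h₀1 : 1 ≤ k₀ := h₀.1
  have h₀2 : k₀ ≤ l₀ := h₀.2.1
  have h₀3 : l₀ ≤ T.length := h₀.2.2.1
  have h₀4 : frag T k₀ l₀ = t := h₀.2.2.2
  have ha₁ : 1 ≤ a₁ := le_trans ha₂ h21
  -- Step A: all shifted fragments are equal to u
  have stepA : ∀ k l, (k,l) ∈ occ T t → frag T (k+1-a₁) (l+d) = u := by
    have key : ∀ k l, (k,l) ∈ occ T t →
        frag T (k+1-a₁) (l+d) =
          (if d₂ ≤ d₁ then e₁ else e₁ ++ e₂.drop (t.length + d₁ + a₂ - 1)) := by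
      intro k l hkl
      obtain ⟨hk1, hocc1⟩ := hs₁ k l hkl
      obtain ⟨hk2, hocc2⟩ := hs₂ k l hkl
      have hlen := occ_len hkl
      have hlen1 := occ_len hocc1
      have hlen2 := occ_len hocc2
      have hkl1 : k ≤ l := hkl.2.1
      have hln : l + d₁ ≤ T.length := hocc1.2.2.1
      have hln2 : l + d₂ ≤ T.length := hocc2.2.2.1
      by_cases hcase : d₂ ≤ d₁
      · have : d = d₁ := by omega
        rw [this, if_pos hcase]
        exact hocc1.2.2.2
      · rw [if_neg hcase]
        have hdd : d = d₂ := by omega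
        rw [hdd]
        have hglue := frag_glue T (p := k+1-a₁) (q := l+d₁) (p' := k+1-a₂) (q' := l+d₂)
          (by omega) (by omega) (by omega) (by omega) (by omega) (by omega) (by omega)
        rw [hglue, hocc1.2.2.2, hocc2.2.2.2]
        congr 1
        congr 1
        omega
      -- end key
    intro k l hkl
    rw [key k l hkl, ← key k₀ l₀ h₀]
  -- canonical occurrence of u
  have hk₀a : a₁ ≤ k₀ := (hs₁ k₀ l₀ h₀).1
  have hocc01 := (hs₁ k₀ l₀ h₀).2
  have hocc02 := (hs₂ k₀ l₀ h₀).2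
  have hln : l₀ + d₁ ≤ T.length := hocc01.2.2.1
  have hln2 : l₀ + d₂ ≤ T.length := hocc02.2.2.1
  have huocc : (k₀+1-a₁, l₀+d) ∈ occ T u :=
    ⟨by omega, by omega, by omega, rfl⟩
  have hulen : u.length = t.length + (a₁-1) + d := by
    rw [hu, frag_length T (by omega) (by omega) (by omega)]; omega
  -- t occurs in u
  have htin : frag u a₁ (t.length + a₁ - 1) = t := by
    have := frag_of_inner huocc h₀ (by omega) (by omega)
    have e1 : k₀ + 1 - (k₀+1-a₁) = a₁ := by omega
    have e2 : l₀ + 1 - (k₀+1-a₁) = t.length + a₁ - 1 := by omega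
    rw [e1, e2] at this
    exact this
  have htb : t.length + a₁ - 1 ≤ u.length := by omega
  have h1t : 1 ≤ t.length := by omega
  -- cardinalities
  have hcard : (occ T t).ncard = (occ T u).ncard := by
    apply le_antisymm
    · refine Set.ncard_le_ncard_of_injOn (fun p => (p.1+1-a₁, p.2+d)) ?_ ?_ (occ_finite T u)
      · rintro ⟨k,l⟩ hkl
        have hk1 := (hs₁ k l hkl).1
        have h1 := (hs₁ k l hkl).2
        have h2 := (hs₂ k l hkl).2
        have hl1 : l + d₁ ≤ T.length := h1.2.2.1
        have hl2 : l + d₂ ≤ T.length := h2.2.2.1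
        have hkl1 : k ≤ l := hkl.2.1
        refine ⟨?_, ?_, ?_, stepA k l hkl⟩ <;> dsimp only <;> omega
      · rintro ⟨k,l⟩ hkl ⟨k',l'⟩ hkl' heq
        simp only [Prod.mk.injEq] at heq ⊢
        have := (hs₁ k l hkl).1
        have := (hs₁ k' l' hkl').1
        omega
    · refine Set.ncard_le_ncard_of_injOn (fun p => (p.1+a₁-1, p.1+(t.length + a₁ - 1)-1)) ?_ ?_ (occ_finite T t)
      · rintro ⟨p,q⟩ hpq
        exact occ_comp hpq ha₁ (by omega) htb htin
      · rintro ⟨p,q⟩ hpq ⟨p',q'⟩ hpq' heq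
        simp only [Prod.mk.injEq] at heq ⊢
        have l1 := occ_len hpq
        have l2 := occ_len hpq'
        have hp1 : 1 ≤ p := hpq.1
        have hp2 : 1 ≤ p' := hpq'.1
        omega
  refine ⟨⟨⟨k₀+1-a₁, l₀+d, by omega, by omega, by omega, rfl⟩,
    ⟨a₁, t.length + a₁ - 1, ha₁, by omega, htb, htin⟩, hcard⟩, hulen⟩

/-- If `t` is a substring of `T`, then for every `s ∈ S_t` we have `ext(t) = ext(s)`. -/
theorem extEq {α : Type*} (T t : List α) (ht : IsSub T t) :
    ∀ s ∈ Sset T t, ∀ e₁ e₂ : List α, IsExt T t e₁ → IsExt T s e₂ → e₁ = e₂ := by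
  rintro s ⟨hsubs, ⟨a, b, ha, hab, hb, hfr⟩, hcards⟩ e₁ e₂
    ⟨⟨hsub1, ⟨a₁, b₁, ha1, hab1, hb1, hfr1⟩, hcard1⟩, hmax1⟩
    ⟨⟨hsub2, ⟨av, bv, hav, habv, hbv, hfrv⟩, hcard2'⟩, hmax2⟩
  obtain ⟨k₀, l₀, hk1, hk2, hk3, hk4⟩ := ht
  have h₀ : (k₀, l₀) ∈ occ T t := ⟨hk1, hk2, hk3, hk4⟩
  obtain ⟨is, js, his1, his2, his3, his4⟩ := hsubs
  have hoccs : (is, js) ∈ occ T s := ⟨his1, his2, his3, his4⟩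
  obtain ⟨i1, j1, hi11, hi12, hi13, hi14⟩ := hsub1
  have hocc1 : (i1, j1) ∈ occ T e₁ := ⟨hi11, hi12, hi13, hi14⟩
  obtain ⟨i2, j2, hi21, hi22, hi23, hi24⟩ := hsub2
  have hocc2 : (i2, j2) ∈ occ T e₂ := ⟨hi21, hi22, hi23, hi24⟩
  -- t occurs in e₂ at (av+a-1, av+b-1)
  have hslen : s.length = bv - av + 1 := by rw [← hfrv, frag_length e₂ hav habv hbv]
  have hfr2 : frag e₂ (av + a - 1) (av + b - 1) = t := by
    rw [← frag_frag e₂ (q := bv) hav ha hab (by omega), hfrv, hfr]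
  have hb2 : av + b - 1 ≤ e₂.length := by omega
  have hcard2 : (occ T t).ncard = (occ T e₂).ncard := hcards.trans hcard2'
  set a₂ := av + a - 1 with ha₂def
  set b₂ := av + b - 1 with hb₂def
  have ha2 : 1 ≤ a₂ := by omega
  have hab2 : a₂ ≤ b₂ := by omega
  -- surjectivity data
  have surjs := surj_occ hoccs ha hab hb hfr hcards
  have surj1 := surj_occ hocc1 ha1 hab1 hb1 hfr1 hcard1
  have surj2 := surj_occ hocc2 ha2 hab2 hb2 hfr2 hcard2
  -- length identities
  have htlen := occ_len h₀
  have htlen1 : t.length = b₁ - a₁ + 1 := by rw [← hfr1, frag_length e₁ ha1 hab1 hb1]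
  have htlen2 : t.length = b₂ - a₂ + 1 := by rw [← hfr2, frag_length e₂ ha2 hab2 hb2]
  have hE1 : e₁.length = t.length + (a₁ - 1) + (e₁.length - b₁) := by omega
  have hE2 : e₂.length = t.length + (a₂ - 1) + (e₂.length - b₂) := by omega
  have hue1 : frag T (k₀+1-a₁) (l₀ + (e₁.length - b₁)) = e₁ := (surj1 k₀ l₀ h₀).2.2.2.2
  have hue2 : frag T (k₀+1-a₂) (l₀ + (e₂.length - b₂)) = e₂ := (surj2 k₀ l₀ h₀).2.2.2.2
  have hk0a1 : a₁ ≤ k₀ := (surj1 k₀ l₀ h₀).1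
  have hk0a2 : a₂ ≤ k₀ := (surj2 k₀ l₀ h₀).1
  have hk0a : a ≤ k₀ := (surjs k₀ l₀ h₀).1
  -- step 1 : s occurs in e₁, hence e₁ ∈ Sset T s
  have hsin1 : ∃ p q : ℕ, 1 ≤ p ∧ p ≤ q ∧ q ≤ e₁.length ∧ frag e₁ p q = s := by
    rcases le_or_gt a a₁ with hc | hc
    · have M := mergeAux h₀ ha hc surj1 surjs
      have hle := hmax1 _ M.1
      rw [M.2] at hle
      have hmaxd : max (e₁.length - b₁) (s.length - b) = e₁.length - b₁ := by omega
      rw [hmaxd] at M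
      rw [hue1] at M
      have hds : s.length - b ≤ e₁.length - b₁ := by omega
      have hsocc : (k₀+1-a, l₀ + (s.length - b)) ∈ occ T s := (surjs k₀ l₀ h₀).2
      have he1occ : (k₀+1-a₁, l₀ + (e₁.length - b₁)) ∈ occ T e₁ := (surj1 k₀ l₀ h₀).2
      have key := frag_of_inner he1occ hsocc (by omega) (by omega)
      refine ⟨_, _, by omega, ?_, ?_, key⟩
      · omega
      · have := occ_len he1occ
        omega
    · exfalso
      have M := mergeAux h₀ ha1 hc.le surjs surj1
      have hle := hmax1 _ M.1
      rw [M.2] at hle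
      have h1 : e₁.length - b₁ ≤ max (s.length - b) (e₁.length - b₁) := le_max_right _ _
      omega
  -- e₁ ∈ Sset T s, so |e₁| ≤ |e₂|
  have he1s : e₁ ∈ Sset T s :=
    ⟨⟨i1, j1, hi11, hi12, hi13, hi14⟩, hsin1, hcards.symm.trans hcard1⟩
  -- e₂ ∈ Sset T t, so |e₂| ≤ |e₁|
  have he2t : e₂ ∈ Sset T t :=
    ⟨⟨i2, j2, hi21, hi22, hi23, hi24⟩, ⟨a₂, b₂, ha2, hab2, hb2, hfr2⟩, hcard2⟩
  have hlen12 : e₁.length = e₂.length :=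
    le_antisymm (hmax2 _ he1s) (hmax1 _ he2t)
  -- final merge of e₁ and e₂
  have hkey : a₁ = a₂ ∧ e₁.length - b₁ = e₂.length - b₂ := by
    rcases le_total a₂ a₁ with hc | hc
    · have M := mergeAux h₀ ha2 hc surj1 surj2
      have hle := hmax1 _ M.1
      rw [M.2] at hle
      constructor <;> omega
    · have M := mergeAux h₀ ha1 hc surj2 surj1
      have hle := hmax1 _ M.1
      rw [M.2] at hle
      constructor <;> omega
  rw [← hue1, ← hue2, hkey.1, hkey.2]
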